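/- Let Φ be an irreducible reduced crystallographic simply-laced root system with base Δ and highest root θ. Let α ∈ Δ be an extreme simple root with neighbour β, and assume α is quasi-abelian, i.e. either abelian (c_α(θ) = 1) or a Heisenberg root. Then the subgroup W_{Δ∖{α,β}} of the Weyl group, generated by the simple reflections in the simple roots orthogonal to α, acts transitively on Φ_α = {ε ∈ Φ : c_α(ε) = 1 and ⟨ε,α⟩ = 0}. (Paper's Lemma: the Weyl group of the Levi M_α acts transitively on Φ_α.) -/

import Mathlib

/-!
Write `ε - ε' = ∑ d γ • γ` over the simple roots. Pairing with `α` and using that `α` pairs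
non-trivially only with `α` and `β` gives `d β = 0`, so `d` is supported on the set `S` of simple
roots orthogonal to `α`. From `0 < ⟪ε - ε', ε - ε'⟫ = ∑ d γ * ⟪γ, ε - ε'⟫` some `γ ∈ S` has
`d γ * (⟪ε, γ⟫ - ⟪ε', γ⟫) > 0`; as both pairings lie in `{-1, 0, 1}` (simply-laced), reflecting
`ε` or `ε'` in `γ` lowers `|d γ|` by one. Induction on `∑ |d γ|` finishes.
-/

open scoped InnerProductSpace

namespace PaperRS

variable {E : Type*} [NormedAddCommGroup E] [InnerProductSpace ℝ E]

/-- A reduced crystallographic simply-laced root system, normalized so that every root has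
squared length `2` (hence `⟪δ, ε⟫` is the Cartan integer `⟨δ, ε^∨⟩`). -/
structure IsRootSystem (Φ : Set E) : Prop where
  finite : Φ.Finite
  nonzero : (0 : E) ∉ Φ
  span_top : Submodule.span ℝ Φ = ⊤
  norm_two : ∀ α ∈ Φ, ⟪α, α⟫_ℝ = 2
  reduced : ∀ α ∈ Φ, ∀ t : ℝ, t • α ∈ Φ → t = 1 ∨ t = -1
  cartan_int : ∀ α ∈ Φ, ∀ β ∈ Φ, ∃ n : ℤ, ⟪α, β⟫_ℝ = (n : ℝ)
  reflect_mem : ∀ α ∈ Φ, ∀ β ∈ Φ, β - ⟪β, α⟫_ℝ • α ∈ Φ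

/-- Irreducibility: `Φ` is nonempty and cannot be split into two mutually orthogonal parts. -/
def IsIrreducible (Φ : Set E) : Prop :=
  Φ.Nonempty ∧ ∀ Φ₁ Φ₂ : Set E, Φ = Φ₁ ∪ Φ₂ →
    (∀ a ∈ Φ₁, ∀ b ∈ Φ₂, ⟪a, b⟫_ℝ = 0) → Φ₁ = ∅ ∨ Φ₂ = ∅

/-- The reflection in (the hyperplane orthogonal to) a root `α` of squared length `2`. -/
def sRefl (α : E) : Function.End E := fun x => x - ⟪x, α⟫_ℝ • α

/-- The group generated by the reflections in the elements of `S`; since every reflection is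
an involution, the submonoid generated by the reflections coincides with the generated group. -/
def genBy (S : Set E) : Submonoid (Function.End E) :=
  Submonoid.closure (sRefl '' S)

/-- The Weyl group of `Φ`: the group generated by the reflections in all the roots. -/
abbrev WeylGroup (Φ : Set E) : Submonoid (Function.End E) := genBy Φ

/-- A base (set of simple roots) of `Φ`, together with the (unique) integer coefficients
`coeff δ γ` of each root `δ` with respect to the simple roots. -/
structure Base (Φ : Set E) where
  Δ : Finset E
  coeff : E → E → ℤ
  subset : ↑Δ ⊆ Φ
  indep : LinearIndependent ℝ (fun γ : {x : E // x ∈ Δ} => (γ : E))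
  expand : ∀ δ ∈ Φ, δ = ∑ γ ∈ Δ, (coeff δ γ : ℝ) • γ
  sign : ∀ δ ∈ Φ, (∀ γ ∈ Δ, 0 ≤ coeff δ γ) ∨ (∀ γ ∈ Δ, coeff δ γ ≤ 0)

variable {Φ : Set E}

/-- `θ` is the highest root of `Φ` with respect to the base `B`. -/
def IsHighest (B : Base Φ) (θ : E) : Prop :=
  θ ∈ Φ ∧ ∀ δ ∈ Φ, ∀ γ ∈ B.Δ, B.coeff δ γ ≤ B.coeff θ γ

/-- `α` is a Heisenberg simple root: the highest root `θ` has `α`-coefficient `2`, and every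
root other than `±θ` has `α`-coefficient in `{-1, 0, 1}`. -/
def IsHeisenberg (B : Base Φ) (θ α : E) : Prop :=
  B.coeff θ α = 2 ∧
    ∀ δ ∈ Φ, δ ≠ θ → δ ≠ -θ →
      B.coeff δ α = -1 ∨ B.coeff δ α = 0 ∨ B.coeff δ α = 1

/-- `α` is an extreme simple root with (unique) neighbour `β`. -/
def IsExtreme (B : Base Φ) (α β : E) : Prop :=
  β ∈ B.Δ ∧ β ≠ α ∧ ⟪α, β⟫_ℝ ≠ 0 ∧
    ∀ γ ∈ B.Δ, γ ≠ α → ⟪α, γ⟫_ℝ ≠ 0 → γ = β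

/-- `Φ_α`: the roots with `α`-coefficient `1` that are orthogonal to `α`. -/
def PhiSet (B : Base Φ) (α : E) : Set E :=
  {ε ∈ Φ | B.coeff ε α = 1 ∧ ⟪ε, α⟫_ℝ = 0}

/-- `Ψ_α`: the roots `ε` with `α`-coefficient `1` and `⟪ε, α⟫ ≤ 0`. -/
def PsiSet (B : Base Φ) (α : E) : Set E :=
  {ε ∈ Φ | B.coeff ε α = 1 ∧ ⟪ε, α⟫_ℝ ≤ 0}

theorem sRefl_sRefl {γ : E} (hγ : ⟪γ, γ⟫_ℝ = 2) (x : E) : sRefl γ (sRefl γ x) = x := by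
  simp only [sRefl, inner_sub_left, real_inner_smul_left, hγ]
  module

theorem sRefl_mem_genBy {S : Set E} {γ : E} (hγ : γ ∈ S) : sRefl γ ∈ genBy S :=
  Submonoid.subset_closure ⟨γ, hγ, rfl⟩

namespace Base

variable (B : Base Φ)

theorem coeff_eq_of_eq_sum {δ : E} (hδ : δ ∈ Φ) {r : E → ℝ}
    (hr : δ = ∑ γ ∈ B.Δ, r γ • γ) {γ : E} (hγ : γ ∈ B.Δ) : (B.coeff δ γ : ℝ) = r γ := by
  have hzero : ∑ γ ∈ B.Δ, ((B.coeff δ γ : ℝ) - r γ) • γ = 0 := by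
    simp only [sub_smul, Finset.sum_sub_distrib, ← hr, ← B.expand δ hδ, sub_self]
  exact sub_eq_zero.mp ((linearIndepOn_finset_iff (v := id) (s := B.Δ)).mp B.indep _ hzero γ hγ)

theorem ne_smul_of_coeff_ne_zero {δ γ γ' : E} (hδ : δ ∈ Φ) (hγ : γ ∈ B.Δ) (hγ' : γ' ∈ B.Δ)
    (hne : γ' ≠ γ) (hc : B.coeff δ γ' ≠ 0) (t : ℝ) : δ ≠ t • γ := by
  classical
  rintro rfl
  have hsum : t • γ = ∑ x ∈ B.Δ, (if x = γ then t else 0) • x := by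
    simp [ite_smul, hγ]
  have := B.coeff_eq_of_eq_sum hδ hsum hγ'
  rw [if_neg hne] at this
  exact hc (by exact_mod_cast this)

theorem inner_sub_eq_sum {ε ε' : E} (hε : ε ∈ Φ) (hε' : ε' ∈ Φ) (x : E) :
    ⟪ε - ε', x⟫_ℝ = ∑ γ ∈ B.Δ, ((B.coeff ε γ - B.coeff ε' γ : ℤ) : ℝ) * ⟪γ, x⟫_ℝ := by
  conv_lhs => rw [B.expand ε hε, B.expand ε' hε']
  simp only [inner_sub_left, sum_inner, real_inner_smul_left, ← Finset.sum_sub_distrib,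
    Int.cast_sub, sub_mul]

def coeffDist (δ ζ : E) : ℕ :=
  ∑ γ ∈ B.Δ, (B.coeff δ γ - B.coeff ζ γ).natAbs

theorem coeffDist_comm (δ ζ : E) : B.coeffDist δ ζ = B.coeffDist ζ δ :=
  Finset.sum_congr rfl fun γ _ => by rw [← Int.natAbs_neg, neg_sub]

end Base

namespace IsRootSystem

theorem sRefl_mem (hΦ : IsRootSystem Φ) {γ δ : E} (hγ : γ ∈ Φ) (hδ : δ ∈ Φ) : sRefl γ δ ∈ Φ :=
  hΦ.reflect_mem γ hγ δ hδ

theorem exists_int_inner_of_ne (hΦ : IsRootSystem Φ) {δ ε : E} (hδ : δ ∈ Φ) (hε : ε ∈ Φ)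
    (h₁ : ε ≠ δ) (h₂ : ε ≠ -δ) : ∃ n : ℤ, ⟪ε, δ⟫_ℝ = n ∧ |n| ≤ 1 := by
  obtain ⟨n, hn⟩ := hΦ.cartan_int ε hε δ hδ
  have hadd := real_inner_self_pos.mpr fun h : ε + δ = 0 => h₂ (eq_neg_of_add_eq_zero_left h)
  have hsub := real_inner_self_pos.mpr (sub_ne_zero.mpr h₁)
  rw [real_inner_add_add_self, hΦ.norm_two ε hε, hΦ.norm_two δ hδ, hn] at hadd
  rw [real_inner_sub_sub_self, hΦ.norm_two ε hε, hΦ.norm_two δ hδ, hn] at hsub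
  have h₃ : (-2 : ℤ) < n := by exact_mod_cast (by linarith : (-2 : ℝ) < n)
  have h₄ : n < 2 := by exact_mod_cast (by linarith : (n : ℝ) < 2)
  exact ⟨n, hn, abs_le.mpr ⟨by omega, by omega⟩⟩

open scoped Classical in
theorem coeff_sRefl (hΦ : IsRootSystem Φ) (B : Base Φ) {δ γ γ' : E} (hδ : δ ∈ Φ)
    (hγ : γ ∈ B.Δ) {m : ℤ} (hm : ⟪δ, γ⟫_ℝ = m) (hγ' : γ' ∈ B.Δ) :
    B.coeff (sRefl γ δ) γ' = B.coeff δ γ' - if γ' = γ then m else 0 := by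
  have hsum : sRefl γ δ = ∑ x ∈ B.Δ, ((B.coeff δ x : ℝ) - if x = γ then (m : ℝ) else 0) • x := by
    simp only [sub_smul, Finset.sum_sub_distrib, ← B.expand δ hδ, ite_smul, zero_smul,
      Finset.sum_ite_eq', if_pos hγ, sRefl, hm]
  have := B.coeff_eq_of_eq_sum (hΦ.sRefl_mem (B.subset hγ) hδ) hsum hγ'
  split_ifs at this ⊢ <;> exact_mod_cast this

theorem coeff_sRefl_of_ne (hΦ : IsRootSystem Φ) (B : Base Φ) {δ γ γ' : E}
    (hδ : δ ∈ Φ) (hγ : γ ∈ B.Δ) (hγ' : γ' ∈ B.Δ) (hne : γ' ≠ γ) :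
    B.coeff (sRefl γ δ) γ' = B.coeff δ γ' := by
  obtain ⟨m, hm⟩ := hΦ.cartan_int δ hδ γ (B.subset hγ)
  rw [hΦ.coeff_sRefl B hδ hγ hm hγ', if_neg hne, sub_zero]

theorem coeffDist_sRefl_lt (hΦ : IsRootSystem Φ) (B : Base Φ) {δ γ : E}
    (hδ : δ ∈ Φ) (hγ : γ ∈ B.Δ) {m : ℤ} (hm : ⟪δ, γ⟫_ℝ = m) (ζ : E)
    (h : (B.coeff δ γ - m - B.coeff ζ γ).natAbs < (B.coeff δ γ - B.coeff ζ γ).natAbs) :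
    B.coeffDist (sRefl γ δ) ζ < B.coeffDist δ ζ := by
  refine Finset.sum_lt_sum (fun γ' hγ' => ?_) ⟨γ, hγ, ?_⟩
  · rw [hΦ.coeff_sRefl B hδ hγ hm hγ']
    split_ifs with hγ'γ
    · exact hγ'γ ▸ h.le
    · rw [sub_zero]
  · rwa [hΦ.coeff_sRefl B hδ hγ hm hγ, if_pos rfl]

theorem exists_coeffDist_sRefl_lt (hΦ : IsRootSystem Φ) (B : Base Φ) {S : Set E}
    {ε ε' : E} (hε : ε ∈ Φ) (hε' : ε' ∈ Φ)
    (hout : ∀ γ ∈ B.Δ, γ ∉ S → B.coeff ε γ = B.coeff ε' γ)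
    (hδ : ∃ δ ∈ B.Δ, δ ∉ S ∧ B.coeff ε δ ≠ 0) (hne : ε ≠ ε') :
    ∃ γ ∈ B.Δ, γ ∈ S ∧
      (B.coeffDist (sRefl γ ε) ε' < B.coeffDist ε ε' ∨
        B.coeffDist ε (sRefl γ ε') < B.coeffDist ε ε') := by
  have hpos := real_inner_self_pos.mpr (sub_ne_zero.mpr hne)
  rw [B.inner_sub_eq_sum hε hε'] at hpos
  obtain ⟨γ, hγ, hγpos⟩ := Finset.exists_lt_of_sum_lt
    (Finset.sum_const_zero.trans_lt hpos)
  have hγS : γ ∈ S := by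
    by_contra hγS
    simp [hout γ hγ hγS] at hγpos
  obtain ⟨δ, hδΔ, hδS, hδc⟩ := hδ
  have hδγ : δ ≠ γ := by rintro rfl; exact hδS hγS
  have hδc' : B.coeff ε' δ ≠ 0 := hout δ hδΔ hδS ▸ hδc
  have hγΦ := B.subset hγ
  obtain ⟨m, hm, hm1⟩ := hΦ.exists_int_inner_of_ne hγΦ hε
    (by simpa using B.ne_smul_of_coeff_ne_zero hε hγ hδΔ hδγ hδc 1)
    (by simpa using B.ne_smul_of_coeff_ne_zero hε hγ hδΔ hδγ hδc (-1))
  obtain ⟨m', hm', hm1'⟩ := hΦ.exists_int_inner_of_ne hγΦ hε'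
    (by simpa using B.ne_smul_of_coeff_ne_zero hε' hγ hδΔ hδγ hδc' 1)
    (by simpa using B.ne_smul_of_coeff_ne_zero hε' hγ hδΔ hδγ hδc' (-1))
  rw [inner_sub_right, real_inner_comm ε, real_inner_comm ε', hm, hm'] at hγpos
  have hprod : 0 < (B.coeff ε γ - B.coeff ε' γ) * (m - m') := by exact_mod_cast hγpos
  have key : (B.coeff ε γ - m - B.coeff ε' γ).natAbs < (B.coeff ε γ - B.coeff ε' γ).natAbs ∨
      (B.coeff ε' γ - m' - B.coeff ε γ).natAbs < (B.coeff ε' γ - B.coeff ε γ).natAbs := by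
    rw [abs_le] at hm1 hm1'
    rcases pos_and_pos_or_neg_and_neg_of_mul_pos hprod with h | h <;> omega
  refine ⟨γ, hγ, hγS, key.imp (hΦ.coeffDist_sRefl_lt B hε hγ hm ε') fun h => ?_⟩
  rw [B.coeffDist_comm ε, B.coeffDist_comm ε]
  exact hΦ.coeffDist_sRefl_lt B hε' hγ hm' ε h

theorem exists_mem_genBy_apply_eq_of_coeff_eq (hΦ : IsRootSystem Φ) (B : Base Φ)
    {S : Set E} {ε ε' : E} (hε : ε ∈ Φ) (hε' : ε' ∈ Φ)
    (hout : ∀ γ ∈ B.Δ, γ ∉ S → B.coeff ε γ = B.coeff ε' γ)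
    (hδ : ∃ δ ∈ B.Δ, δ ∉ S ∧ B.coeff ε δ ≠ 0) :
    ∃ w ∈ genBy S, w ε = ε' := by
  induction hn : B.coeffDist ε ε' using Nat.strong_induction_on generalizing ε ε' with
  | _ n ih =>
  by_cases heq : ε = ε'
  · exact ⟨1, one_mem _, heq⟩
  obtain ⟨γ, hγ, hγS, hlt⟩ := hΦ.exists_coeffDist_sRefl_lt B hε hε' hout hδ heq
  have hsame : ∀ ζ ∈ Φ, ∀ γ' ∈ B.Δ, γ' ∉ S → B.coeff (sRefl γ ζ) γ' = B.coeff ζ γ' :=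
    fun ζ hζ γ' hγ' hγ'S => hΦ.coeff_sRefl_of_ne B hζ hγ hγ' (ne_of_mem_of_not_mem hγS hγ'S).symm
  rcases hlt with hlt | hlt
  · obtain ⟨w, hw, hwε⟩ := ih _ (hn ▸ hlt) (hΦ.sRefl_mem (B.subset hγ) hε) hε'
      (fun γ' hγ' hγ'S => (hsame ε hε γ' hγ' hγ'S).trans (hout γ' hγ' hγ'S))
      (by obtain ⟨δ, hδ, hδS, hδc⟩ := hδ; exact ⟨δ, hδ, hδS, hsame ε hε δ hδ hδS ▸ hδc⟩) rfl
    exact ⟨w * sRefl γ, mul_mem hw (sRefl_mem_genBy hγS), hwε⟩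
  · obtain ⟨w, hw, hwε⟩ := ih _ (hn ▸ hlt) hε (hΦ.sRefl_mem (B.subset hγ) hε')
      (fun γ' hγ' hγ'S => (hout γ' hγ' hγ'S).trans (hsame ε' hε' γ' hγ' hγ'S).symm) hδ rfl
    refine ⟨sRefl γ * w, mul_mem (sRefl_mem_genBy hγS) hw, ?_⟩
    show sRefl γ (w ε) = ε'
    rw [hwε, sRefl_sRefl (hΦ.norm_two γ (B.subset hγ))]

end IsRootSystem

namespace IsExtreme

variable {B : Base Φ} {α β : E}

theorem eq_or_eq_of_inner_ne_zero (hext : IsExtreme B α β) {γ : E} (hγ : γ ∈ B.Δ)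
    (hγα : ⟪γ, α⟫_ℝ ≠ 0) : γ = α ∨ γ = β :=
  or_iff_not_imp_left.mpr fun hne => hext.2.2.2 γ hγ hne (by rwa [real_inner_comm])

theorem coeff_eq_of_inner_eq (hext : IsExtreme B α β) {ε ε' : E} (hε : ε ∈ Φ) (hε' : ε' ∈ Φ)
    (hcα : B.coeff ε α = B.coeff ε' α) (hinner : ⟪ε, α⟫_ℝ = ⟪ε', α⟫_ℝ) :
    B.coeff ε β = B.coeff ε' β := by
  have hsum := B.inner_sub_eq_sum hε hε' α
  rw [inner_sub_left, hinner, sub_self, Finset.sum_eq_single β] at hsum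
  · have hβα : ⟪β, α⟫_ℝ ≠ 0 := by rw [real_inner_comm]; exact hext.2.2.1
    have := (mul_eq_zero.mp hsum.symm).resolve_right hβα
    exact sub_eq_zero.mp (by exact_mod_cast this)
  · intro γ hγ hγβ
    by_cases hγα : ⟪γ, α⟫_ℝ = 0
    · rw [hγα, mul_zero]
    · rcases hext.eq_or_eq_of_inner_ne_zero hγ hγα with rfl | rfl
      · rw [hcα, sub_self, Int.cast_zero, zero_mul]
      · exact absurd rfl hγβ
  · exact fun h => absurd hext.1 h

end IsExtreme

theorem levi_M_transitive_on_PhiSet_general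
    (hΦ : IsRootSystem Φ) (B : Base Φ)
    {α β : E} (hα : α ∈ B.Δ) (hext : IsExtreme B α β)
    {ε ε' : E} (hε : ε ∈ PhiSet B α) (hε' : ε' ∈ PhiSet B α) :
    ∃ w ∈ genBy {γ : E | γ ∈ B.Δ ∧ ⟪γ, α⟫_ℝ = 0}, w ε = ε' := by
  obtain ⟨hεΦ, hεα, hεo⟩ := hε
  obtain ⟨hε'Φ, hε'α, hε'o⟩ := hε'
  have hαS : α ∉ {γ : E | γ ∈ B.Δ ∧ ⟪γ, α⟫_ℝ = 0} := fun h =>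
    two_ne_zero ((hΦ.norm_two α (B.subset hα)).symm.trans h.2)
  refine hΦ.exists_mem_genBy_apply_eq_of_coeff_eq B hεΦ hε'Φ (fun γ hγ hγS => ?_)
    ⟨α, hα, hαS, by rw [hεα]; exact one_ne_zero⟩
  rcases hext.eq_or_eq_of_inner_ne_zero hγ fun h => hγS ⟨hγ, h⟩ with rfl | rfl
  · rw [hεα, hε'α]
  · exact hext.coeff_eq_of_inner_eq hεΦ hε'Φ (hεα.trans hε'α.symm) (hεo.trans hε'o.symm)

/-- For an extreme quasi-abelian simple root `α` (abelian or Heisenberg), the subgroup of the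
Weyl group generated by the simple reflections in the simple roots orthogonal to `α`
acts transitively on `Φ_α = {ε ∈ Φ : c_α(ε) = 1, ⟪ε, α⟫ = 0}`. -/
theorem levi_M_transitive_on_PhiSet
    (hΦ : IsRootSystem Φ) (hirr : IsIrreducible Φ) (B : Base Φ)
    {θ : E} (hθ : IsHighest B θ)
    {α β : E} (hα : α ∈ B.Δ) (hext : IsExtreme B α β)
    (hqa : B.coeff θ α = 1 ∨ IsHeisenberg B θ α)
    {ε ε' : E} (hε : ε ∈ PhiSet B α) (hε' : ε' ∈ PhiSet B α) :
    ∃ w ∈ genBy {γ : E | γ ∈ B.Δ ∧ ⟪γ, α⟫_ℝ = 0}, w ε = ε' :=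
  levi_M_transitive_on_PhiSet_general hΦ B hα hext hε hε'

end PaperRS
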